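/- arXiv:0910.4219 — 8 statements merged into one kernel-verified Lean document; each statement's English description precedes it below -/
import Mathlib

section
/- Let p be a prime, P a finite p-group, H a finite group of order prime to p acting on P by automorphisms, and G = P ⋊ H the semidirect product. Then G has a surjective group homomorphism onto ℤ/pℤ if and only if there exists a nontrivial group homomorphism ψ : P → ℤ/pℤ that is H-invariant, i.e. ψ(h·k) = ψ(k) for every h ∈ H and k ∈ P. -/
/-- Let `p` be a prime, `P` a finite `p`-group, `H` a finite group of order
prime to `p` acting on `P` by automorphisms (via `φ : H →* MulAut P`), and
`G = P ⋊[φ] H` the semidirect product.  Then `G` has a surjective group homomorphism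
onto `ℤ/pℤ` if and only if there is a nontrivial `H`-invariant homomorphism
`ψ : P → ℤ/pℤ`, i.e. `ψ (φ h k) = ψ k` for all `h ∈ H`, `k ∈ P`. -/
theorem semidirect_surj_onto_zmod_iff_invariant_hom
    (p : ℕ) (hp : p.Prime) (P H : Type*) [Group P] [Group H] [Fintype P] [Fintype H]
    (hP : IsPGroup p P) (hH : ¬ p ∣ Fintype.card H) (φ : H →* MulAut P) :
    (∃ f : SemidirectProduct P H φ →* Multiplicative (ZMod p), Function.Surjective f) ↔
      (∃ ψ : P →* Multiplicative (ZMod p), ψ ≠ 1 ∧ ∀ (h : H) (k : P), ψ (φ h k) = ψ k) := by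
  haveI : Fact p.Prime := ⟨hp⟩
  have hcard : Nat.card (Multiplicative (ZMod p)) = p := by
    simp [Nat.card_eq_fintype_card]
  constructor
  · rintro ⟨f, hf⟩
    refine ⟨f.comp SemidirectProduct.inl, ?_, ?_⟩
    · intro h1
      have hz : ∀ k : P, f (SemidirectProduct.inl k) = 1 := by
        intro k
        have := congrArg (fun g => g k) h1
        simpa using this
      have hsurj : Function.Surjective (f.comp (SemidirectProduct.inr : H →* SemidirectProduct P H φ)) := by
        intro b
        obtain ⟨g, hg⟩ := hf b
        refine ⟨g.right, ?_⟩
        have hdec : SemidirectProduct.inl g.left * SemidirectProduct.inr g.right = g :=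
          SemidirectProduct.inl_left_mul_inr_right g
        calc (f.comp SemidirectProduct.inr) g.right
            = f (SemidirectProduct.inl g.left) * f (SemidirectProduct.inr g.right) := by
              rw [hz]; simp
          _ = f (SemidirectProduct.inl g.left * SemidirectProduct.inr g.right) := by
              rw [map_mul]
          _ = b := by rw [hdec, hg]
      have hdvd := Subgroup.card_dvd_of_surjective
        (f.comp (SemidirectProduct.inr : H →* SemidirectProduct P H φ)) hsurj
      rw [hcard, Nat.card_eq_fintype_card] at hdvd
      exact hH hdvd
    · intro h k
      have := SemidirectProduct.inl_aut (φ := φ) h k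
      calc f.comp SemidirectProduct.inl (φ h k)
          = f (SemidirectProduct.inr h * SemidirectProduct.inl k * SemidirectProduct.inr h⁻¹) := by
            rw [MonoidHom.comp_apply, this]
        _ = f (SemidirectProduct.inl k) := by
            rw [map_mul, map_mul, map_inv]
            rw [mul_comm (f (SemidirectProduct.inr h)) _, mul_assoc]
            simp
  · rintro ⟨ψ, hψne, hψinv⟩
    have hcompat : ∀ h : H, ψ.comp (φ h).toMonoidHom =
        (MulAut.conj ((1 : H →* Multiplicative (ZMod p)) h)).toMonoidHom.comp ψ := by
      intro h
      ext k
      simp [hψinv h k]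
    refine ⟨SemidirectProduct.lift ψ 1 hcompat, ?_⟩
    have hlift : ∀ k : P, SemidirectProduct.lift ψ 1 hcompat (SemidirectProduct.inl k) = ψ k :=
      fun k => SemidirectProduct.lift_inl ψ 1 hcompat k
    -- ψ is surjective since its range is a nontrivial subgroup of a simple (prime order) group
    haveI : IsSimpleGroup (Multiplicative (ZMod p)) := isSimpleGroup_of_prime_card hcard
    have hrange : ψ.range ≠ ⊥ := by
      intro hbot
      apply hψne
      ext k
      have : ψ k ∈ ψ.range := ⟨k, rfl⟩
      rw [hbot, Subgroup.mem_bot] at this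
      simp [this]
    have htop : ψ.range = ⊤ :=
      (ψ.range.normal_of_comm.eq_bot_or_eq_top).resolve_left hrange
    intro b
    have : b ∈ ψ.range := htop ▸ Subgroup.mem_top b
    obtain ⟨k, hk⟩ := this
    exact ⟨SemidirectProduct.inl k, by rw [hlift, hk]⟩
end

section
/- Let p be a prime, G a finite group, and N a normal subgroup of G that is a p-group. Let ḡ be an element of G/N whose order is prime to p. Then: (i) there exists x ∈ G of order prime to p (indeed of order equal to the order of ḡ) whose image in G/N is ḡ; and (ii) any two elements of G of order prime to p mapping to ḡ are conjugate by an element of N. In particular each conjugacy class of p'-elements of G/N lifts to a unique conjugacy class of p'-elements of G. -/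
/-!
(i) If `y` lifts `g` and `m` is the order of `g`, then `y ^ m ∈ N` is killed by some `p ^ k`,
which is invertible modulo `m`; so a suitable power `(y ^ p ^ k) ^ t` still lifts `g` and is
killed by `m`.

(ii) This is the conjugacy half of Schur–Zassenhaus for the cyclic complement `⟨x⟩`. Since a
nontrivial `p`-group is solvable, `⁅N, N⁆ < N`, and by well-founded induction it suffices to
conjugate `x` into `y` modulo `⁅N, N⁆`, i.e. to treat an abelian normal subgroup `A` of order
prime to `m` with `x ^ m = y ^ m = 1`. There `a i = y ^ i * x⁻¹ ^ i ∈ A` is a cocycle for the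
conjugation action of `x`, and an `m`-th root `b` of `∏ i < m, a i` satisfies `b x b⁻¹ = y`.
-/

open scoped IsMulCommutative

theorem IsPGroup.exists_orderOf_eq_and_mk_eq {p : ℕ} {G : Type*} [Group G] {N : Subgroup G}
    [N.Normal] (hN : IsPGroup p N) {g : G ⧸ N} (hg : (orderOf g).Coprime p) :
    ∃ x : G, orderOf x = orderOf g ∧ (x : G ⧸ N) = g := by
  obtain ⟨y, rfl⟩ := QuotientGroup.mk_surjective g
  set m := orderOf (y : G ⧸ N)
  have hym : y ^ m ∈ N := by
    rw [← QuotientGroup.eq_one_iff, QuotientGroup.mk_pow, pow_orderOf_eq_one]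
  obtain ⟨k, hk⟩ := hN ⟨y ^ m, hym⟩
  have hk' : (y ^ m) ^ p ^ k = 1 := congrArg Subtype.val hk
  obtain ⟨t, ht⟩ := exists_pow_eq_self_of_coprime (hg.symm.pow_left k)
  refine ⟨(y ^ p ^ k) ^ t, Nat.dvd_antisymm (orderOf_dvd_of_pow_eq_one ?_) ?_, ?_⟩
  · rw [← pow_mul, ← pow_mul, show p ^ k * (t * m) = m * p ^ k * t by ring, pow_mul, pow_mul, hk',
      one_pow]
  · simpa only [QuotientGroup.mk'_apply, QuotientGroup.mk_pow, ht] using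
      orderOf_map_dvd (QuotientGroup.mk' N) ((y ^ p ^ k) ^ t)
  · simpa only [QuotientGroup.mk_pow] using ht

theorem CommGroup.exists_mul_inv_map_eq_of_coprime {A : Type*} [CommGroup A] {m : ℕ}
    (hm : (Nat.card A).Coprime m) (σ : A →* A) (a : ℕ → A) (h₀ : a 0 = 1) (hₘ : a m = 1)
    (hσ : ∀ i, σ (a i) = (a 1)⁻¹ * a (i + 1)) :
    ∃ b, b * (σ b)⁻¹ = a 1 := by
  set c := ∏ i ∈ Finset.range m, a i
  have hσc : σ c = (a 1)⁻¹ ^ m * c := by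
    have hshift : ∏ i ∈ Finset.range m, a (i + 1) = c := by
      have := Finset.prod_range_succ' a m
      rwa [Finset.prod_range_succ, hₘ, h₀, mul_one, mul_one, eq_comm] at this
    rw [map_prod, Finset.prod_congr rfl fun i _ => hσ i, Finset.prod_mul_distrib,
      Finset.prod_const, Finset.card_range, hshift]
  refine ⟨(powCoprime hm).symm c, (powCoprime hm).injective ?_⟩
  simp only [powCoprime_apply, mul_pow, inv_pow, ← map_pow]
  rw [← powCoprime_apply hm, Equiv.apply_symm_apply, hσc]
  group

theorem Subgroup.exists_conj_eq_of_pow_eq_one_of_coprime {G : Type*} [Group G] {A : Subgroup G}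
    [A.Normal] [IsMulCommutative A] {m : ℕ} (hm : (Nat.card A).Coprime m) {x y : G}
    (hx : x ^ m = 1) (hy : y ^ m = 1) (hxy : (x : G ⧸ A) = y) :
    ∃ a ∈ A, a * x * a⁻¹ = y := by
  have mem : ∀ i : ℕ, y ^ i * (x ^ i)⁻¹ ∈ A := fun i => by
    rw [← QuotientGroup.eq_one_iff, QuotientGroup.mk_mul, QuotientGroup.mk_inv,
      QuotientGroup.mk_pow, QuotientGroup.mk_pow, hxy, mul_inv_cancel]
  let a : ℕ → A := fun i => ⟨y ^ i * (x ^ i)⁻¹, mem i⟩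
  have cocycle : ∀ i, (MulAut.conjNormal x).toMonoidHom (a i) = (a 1)⁻¹ * a (i + 1) := fun i => by
    ext
    show x * (y ^ i * (x ^ i)⁻¹) * x⁻¹ = (y ^ 1 * (x ^ 1)⁻¹)⁻¹ * (y ^ (i + 1) * (x ^ (i + 1))⁻¹)
    group
  obtain ⟨b, hb⟩ := CommGroup.exists_mul_inv_map_eq_of_coprime hm
    (MulAut.conjNormal x).toMonoidHom a (by ext; simp [a]) (by ext; simp [a, hx, hy]) cocycle
  have hb' : (b : G) * (x * b * x⁻¹)⁻¹ = y * x⁻¹ := by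
    simpa [a, MulAut.conjNormal_apply] using congrArg Subtype.val hb
  refine ⟨b, b.2, ?_⟩
  calc (b : G) * x * (b : G)⁻¹ = (b : G) * (x * b * x⁻¹)⁻¹ * x := by group
    _ = y := by rw [hb']; group

theorem IsPGroup.commutator_lt {p : ℕ} [Fact p.Prime] {G : Type*} [Group G] {N : Subgroup G}
    [Finite N] (hN : IsPGroup p N) (hN₁ : N ≠ ⊥) : ⁅N, N⁆ < N := by
  have := hN.isNilpotent
  have := N.nontrivial_iff_ne_bot.mpr hN₁
  rw [← N.range_subtype, MonoidHom.range_eq_map, ← Subgroup.map_commutator,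
    Subgroup.map_subtype_lt_map_subtype]
  exact Group.IsSolvable.commutator_lt_top_of_nontrivial N

theorem IsPGroup.coprime_card_of_coprime {p : ℕ} [Fact p.Prime] {G : Type*} [Group G] [Finite G]
    (hG : IsPGroup p G) {m : ℕ} (hm : m.Coprime p) : (Nat.card G).Coprime m := by
  obtain ⟨k, hk⟩ := IsPGroup.iff_card.mp hG
  exact hk ▸ hm.symm.pow_left k

theorem Subgroup.isMulCommutative_map_mk'_commutator {G : Type*} [Group G] (N : Subgroup G)
    [N.Normal] : IsMulCommutative (N.map (QuotientGroup.mk' ⁅N, N⁆)) := by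
  rw [← Subgroup.commutator_self_eq_bot_iff, ← Subgroup.map_commutator, QuotientGroup.map_mk'_self]

theorem IsPGroup.exists_conj_eq_of_coprime {p : ℕ} [Fact p.Prime] {G : Type*} [Group G] [Finite G]
    {N : Subgroup G} [hNn : N.Normal] (hN : IsPGroup p N) {x y : G} (hx : (orderOf x).Coprime p)
    (hy : (orderOf y).Coprime p) (hxy : (x : G ⧸ N) = y) :
    ∃ n ∈ N, n * x * n⁻¹ = y := by
  induction N using WellFoundedLT.induction generalizing x hNn with
  | ind N ih =>
  by_cases hN₁ : N = ⊥
  · subst hN₁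
    refine ⟨1, one_mem _, ?_⟩
    simpa [QuotientGroup.eq, mul_eq_one_iff_eq_inv, eq_comm] using hxy
  set M := ⁅N, N⁆
  set π := QuotientGroup.mk' M
  have := N.isMulCommutative_map_mk'_commutator
  have := hNn.map π (QuotientGroup.mk'_surjective M)
  obtain ⟨_, ⟨n, hn, rfl⟩, hn'⟩ := Subgroup.exists_conj_eq_of_pow_eq_one_of_coprime
    ((hN.map π).coprime_card_of_coprime (hx.mul_left hy)) (x := π x) (y := π y)
    (by rw [← map_pow, pow_mul, pow_orderOf_eq_one, one_pow, map_one])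
    (by rw [← map_pow, mul_comm, pow_mul, pow_orderOf_eq_one, one_pow, map_one])
    (QuotientGroup.eq.mpr (by simpa [π] using Subgroup.mem_map_of_mem π (QuotientGroup.eq.mp hxy)))
  have hM : M ≤ N := Subgroup.commutator_le_left N N
  obtain ⟨m, hm, hm'⟩ := ih M (hN.commutator_lt hN₁) (hN.to_le hM) (x := n * x * n⁻¹)
    ((SemiconjBy.conj_mk n x).orderOf_eq ▸ hx) (by simpa [π, QuotientGroup.mk'_apply] using hn')
  exact ⟨m * n, mul_mem (hM hm) hn, by rw [← hm']; group⟩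

/-- Let `p` be a prime, `G` a finite group and `N ◁ G` a normal `p`-subgroup.
Let `g ∈ G/N` have order prime to `p`.  Then (i) there is `x ∈ G` of order equal to the
order of `g` (in particular prime to `p`) mapping onto `g`, and (ii) any two elements of
`G` of order prime to `p` mapping to `g` are conjugate by an element of `N`. -/
theorem lift_p_prime_elements_of_quotient_by_p_group
    (p : ℕ) (hp : p.Prime) (G : Type*) [Group G] [Finite G]
    (N : Subgroup G) [N.Normal] (hN : IsPGroup p N)
    (g : G ⧸ N) (hg : Nat.Coprime (orderOf g) p) :
    (∃ x : G, orderOf x = orderOf g ∧ (QuotientGroup.mk x : G ⧸ N) = g) ∧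
    (∀ x y : G, Nat.Coprime (orderOf x) p → Nat.Coprime (orderOf y) p →
      (QuotientGroup.mk x : G ⧸ N) = g → (QuotientGroup.mk y : G ⧸ N) = g →
      ∃ n ∈ N, n * x * n⁻¹ = y) := by
  have := Fact.mk hp
  exact ⟨hN.exists_orderOf_eq_and_mk_eq hg, fun x y hx hy hxg hyg =>
    hN.exists_conj_eq_of_coprime hx hy (hxg.trans hyg.symm)⟩
end

section
/- Let p be an odd prime, G a group, and z ∈ G a central element of order p. Let m̂₁, m̂₂ ∈ G be elements of order p² with m̂₁^p, m̂₂^p ∈ ⟨z⟩, whose commutator lies in ⟨z⟩, and whose images m₁, m₂ in G/⟨z⟩ generate a subgroup of order p². Then ⟨m̂₁, m̂₂⟩ is isomorphic either to ℤ/p²ℤ × ℤ/pℤ or to U_p. -/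
lemma one_add_sq_zero_pow {R : Type*} [CommRing R] (x : R) (hx : x * x = 0) (n : ℕ) :
    (1 + x) ^ n = 1 + (n : R) * x := by
  induction n with
  | zero => simp
  | succ n ih =>
      calc (1 + x) ^ (n + 1) = (1 + (n : R) * x) * (1 + x) := by rw [pow_succ, ih]
        _ = 1 + ((n : R) + 1) * x + (n : R) * (x * x) := by ring
        _ = 1 + (((n : ℕ) + 1 : ℕ) : R) * x := by rw [hx, mul_zero, add_zero]; push_cast; ring

/-- The unit `1 + p` of `ℤ/p²ℤ`. -/
def upUnit (p : ℕ) : (ZMod (p ^ 2))ˣ :=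
  ZMod.unitOfCoprime (1 + p) ((Nat.coprime_add_self_left.mpr (Nat.coprime_one_left p)).pow_right 2)

lemma upUnit_pow (p : ℕ) : upUnit p ^ p = 1 := by
  ext
  have hx : (p : ZMod (p ^ 2)) * p = 0 := by
    have h : ((p ^ 2 : ℕ) : ZMod (p ^ 2)) = 0 := ZMod.natCast_self _
    push_cast at h
    rw [← h]; ring
  rw [Units.val_pow_eq_pow_val, Units.val_one]
  rw [show ((upUnit p : ZMod (p ^ 2))) = ((1 + p : ℕ) : ZMod (p ^ 2)) from
    ZMod.coe_unitOfCoprime _ _]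
  push_cast
  rw [one_add_sq_zero_pow _ hx p, hx, add_zero]

/-- Additive automorphisms of `M` as multiplicative automorphisms of `Multiplicative M`. -/
def addAutToMulAut (M : Type*) [AddGroup M] : Multiplicative (AddAut M) →* MulAut (Multiplicative M) :=
  MonoidHom.mk' (fun f => AddEquiv.toMultiplicative f.toAdd) (fun _ _ => MulEquiv.ext fun _ => rfl)

/-- The action of `ℤ/pℤ` on `ℤ/p²ℤ` in which the generator `1` acts by multiplication
by `1 + p`. -/
def upAction (p : ℕ) : Multiplicative (ZMod p) →* MulAut (Multiplicative (ZMod (p ^ 2))) :=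
  (addAutToMulAut (ZMod (p ^ 2))).comp
    ((AddAut.mulLeft).comp
      (AddMonoidHom.toMultiplicativeLeft
        (ZMod.lift p ⟨zmultiplesHom (Additive (ZMod (p ^ 2))ˣ) (Additive.ofMul (upUnit p)),
          by
            simp only [zmultiplesHom_apply]
            rw [← ofMul_zpow]
            norm_cast
            rw [upUnit_pow p, ofMul_one]⟩)))

/-- `U_p = ℤ/p²ℤ ⋊ ℤ/pℤ`, a generator of `ℤ/pℤ` acting by multiplication by `1 + p`. -/
abbrev Up (p : ℕ) : Type _ :=
  (Multiplicative (ZMod (p ^ 2))) ⋊[upAction p] (Multiplicative (ZMod p))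

/-- The cyclic subgroup generated by a central element is normal. -/
theorem zpowers_normal_of_mem_center {G : Type*} [Group G] {z : G}
    (hz : z ∈ Subgroup.center G) : (Subgroup.zpowers z).Normal := by
  constructor
  intro n hn g
  obtain ⟨k, rfl⟩ := hn
  have hc : Commute g z := Subgroup.mem_center_iff.mp hz g
  refine ⟨k, ?_⟩
  rw [(hc.zpow_right k).eq, mul_inv_cancel_right]

/-!
The power `m̂₁ ^ p` has order `p` and lies in `⟨z⟩`, so it generates `⟨z⟩`. Hence
`⟨z⟩ ≤ H := ⟨m̂₁, m̂₂⟩` and `|H| = p² · p`; since both candidate groups have order `p³`, it is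
enough to map one of them onto `H`.

If `m̂₁` and `m̂₂` commute, then `m̂₂ ^ p = m̂₁ ^ (p k)` and `m̂₂ m̂₁⁻ᵏ` has order dividing `p`, so
`ℤ/p²ℤ × ℤ/pℤ` maps onto `H`. Otherwise `m̂₂⁻¹` conjugates `m̂₁` to `m̂₁ ^ (1 + p d)` with
`p ∤ d`, and a suitable power `x = m̂₂ ^ (-s)` conjugates `m̂₁` to `m̂₁ ^ (1 + p)`. Since
`∑_{i<p} (1 + p) ^ i ≡ p (mod p²)` for odd `p`, multiplying `x` by a power of `m̂₁` yields an
element `y` of order `p` with the same action, and `(1, 0) ↦ m̂₁`, `(0, 1) ↦ y` defines a map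
from `U_p` onto `H`.
-/

open Subgroup Finset

theorem one_add_mul_pow_modEq (p d s : ℕ) : (1 + p * d) ^ s ≡ 1 + s * (p * d) [MOD p ^ 2] := by
  rw [← ZMod.natCast_eq_natCast_iff]
  push_cast
  refine one_add_sq_zero_pow _ ?_ s
  have hp2 : ((p : ZMod (p ^ 2))) ^ 2 = 0 := by exact_mod_cast ZMod.natCast_self (p ^ 2)
  linear_combination (d : ZMod (p ^ 2)) ^ 2 * hp2

theorem sum_range_one_add_pow_modEq {p : ℕ} (hp : Odd p) :
    ∑ i ∈ range p, (1 + p) ^ i ≡ p [MOD p ^ 2] := by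
  obtain ⟨k, hk⟩ := hp
  have hsum : ∑ i ∈ range p, i = p * k := by
    have := sum_range_id_mul_two p
    rw [hk, Nat.add_sub_cancel] at this
    rw [hk]; lia
  have hterm (i : ℕ) : (1 + p) ^ i ≡ 1 + p * i [MOD p ^ 2] := by
    simpa [mul_comm] using one_add_mul_pow_modEq p 1 i
  calc ∑ i ∈ range p, (1 + p) ^ i ≡ ∑ i ∈ range p, (1 + p * i) [MOD p ^ 2] :=
        Nat.ModEq.sum fun i _ => hterm i
    _ = p + p ^ 2 * k := by
        rw [sum_add_distrib, ← mul_sum, hsum, sum_const, card_range, smul_eq_mul, mul_one]; ring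
    _ ≡ p [MOD p ^ 2] := by simp [Nat.ModEq, Nat.add_mul_mod_self_left]

section

variable {G : Type*} [Group G]

theorem Subgroup.nonempty_mulEquiv_of_le_range {A : Type*} [Group A] [Finite A] (φ : A →* G)
    {H : Subgroup G} (hle : H ≤ φ.range) (hcard : Nat.card H = Nat.card A) :
    Nonempty (H ≃* A) := by
  have hrange_le : Nat.card φ.range ≤ Nat.card A :=
    Nat.card_le_card_of_surjective _ φ.rangeRestrict_surjective
  have : Finite φ.range := Finite.of_surjective _ φ.rangeRestrict_surjective
  have hH : H = φ.range := eq_of_le_of_card_ge hle (hcard ▸ hrange_le)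
  have hbij : Function.Bijective φ.rangeRestrict :=
    (Nat.bijective_iff_surjective_and_card _).mpr
      ⟨φ.rangeRestrict_surjective, by rw [← hH, hcard]⟩
  exact ⟨(MulEquiv.subgroupCongr hH).trans (MulEquiv.ofBijective _ hbij).symm⟩

theorem Subgroup.card_eq_card_map_mk'_mul_card {K H : Subgroup G} [K.Normal] (hKH : K ≤ H) :
    Nat.card H = Nat.card (H.map (QuotientGroup.mk' K)) * Nat.card K := by
  rw [← relIndex_ker, QuotientGroup.ker_mk', ← relIndex_bot_left, ← relIndex_bot_left,
    mul_comm, relIndex_mul_relIndex _ _ _ bot_le hKH]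

theorem conj_pow_eq_pow_pow {x a : G} {r : ℕ} (h : x * a * x⁻¹ = a ^ r) (n : ℕ) :
    x ^ n * a * (x ^ n)⁻¹ = a ^ r ^ n := by
  induction n with
  | zero => simp
  | succ n ih =>
    calc x ^ (n + 1) * a * (x ^ (n + 1))⁻¹ = x * (x ^ n * a * (x ^ n)⁻¹) * x⁻¹ := by group
      _ = (x * a * x⁻¹) ^ r ^ n := by rw [ih, conj_pow]
      _ = a ^ r ^ (n + 1) := by rw [h, ← pow_mul, pow_succ']

theorem mul_pow_eq_pow_geomSum_mul_pow {x u : G} {r : ℕ} (h : x * u * x⁻¹ = u ^ r) (n : ℕ) :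
    (u * x) ^ n = u ^ (∑ i ∈ range n, r ^ i) * x ^ n := by
  induction n with
  | zero => simp
  | succ n ih =>
    calc (u * x) ^ (n + 1)
        = u ^ (∑ i ∈ range n, r ^ i) * (x ^ n * u * (x ^ n)⁻¹) * x ^ (n + 1) := by
          rw [pow_succ, ih]; group
      _ = u ^ (∑ i ∈ range (n + 1), r ^ i) * x ^ (n + 1) := by
          rw [conj_pow_eq_pow_pow h, sum_range_succ, pow_add u]

def zmodMulHom (n : ℕ) (g : G) (hg : g ^ n = 1) : Multiplicative (ZMod n) →* G :=
  AddMonoidHom.toMultiplicativeLeft <|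
    ZMod.lift n ⟨zmultiplesHom (Additive G) (.ofMul g), by simp [← ofMul_pow, hg]⟩

theorem zmodMulHom_ofAdd_natCast (n : ℕ) (g : G) (hg : g ^ n = 1) (k : ℕ) :
    zmodMulHom n g hg (Multiplicative.ofAdd (k : ZMod n)) = g ^ k := by
  rw [← Int.cast_natCast, zmodMulHom, AddMonoidHom.coe_toMultiplicativeLeft, Function.comp_apply,
    Function.comp_apply, toAdd_ofAdd, ZMod.lift_coe, zmultiplesHom_apply, toMul_zsmul,
    zpow_natCast, toMul_ofMul]

@[simp]
theorem zmodMulHom_ofAdd_one (n : ℕ) (g : G) (hg : g ^ n = 1) :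
    zmodMulHom n g hg (Multiplicative.ofAdd 1) = g := by
  simpa using zmodMulHom_ofAdd_natCast n g hg 1

theorem zmodMulHom_mem_zpowers (n : ℕ) [NeZero n] (g : G) (hg : g ^ n = 1)
    (x : Multiplicative (ZMod n)) : zmodMulHom n g hg x ∈ zpowers g := by
  rw [← ofAdd_toAdd x, ← ZMod.natCast_zmod_val x.toAdd, zmodMulHom_ofAdd_natCast]
  exact npow_mem_zpowers g _

theorem nonempty_mulEquiv_prod_of_commute {n m : ℕ} [NeZero n] [NeZero m] {a b : G}
    (hab : Commute a b) (ha : a ^ n = 1) (hb : b ^ m ∈ zpowers (a ^ m))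
    (hcard : Nat.card (closure {a, b}) = n * m) :
    Nonempty (closure {a, b} ≃* Multiplicative (ZMod n) × Multiplicative (ZMod m)) := by
  obtain ⟨k, hk : (a ^ m) ^ k = b ^ m⟩ := hb
  set c := b * (a ^ k)⁻¹
  have hc : c ^ m = 1 := by
    have hakm : (a ^ k) ^ m = b ^ m := by
      rw [← zpow_natCast, ← zpow_mul, mul_comm, zpow_mul, zpow_natCast, hk]
    rw [(hab.symm.zpow_right k).inv_right.mul_pow, inv_pow, hakm, mul_inv_cancel]
  have hac : Commute a c := hab.mul_right ((Commute.refl a).zpow_right k).inv_right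
  let φ := (zmodMulHom n a ha).noncommCoprod (zmodMulHom m c hc) fun x y => by
    obtain ⟨i, hi⟩ := mem_zpowers_iff.mp (zmodMulHom_mem_zpowers n a ha x)
    obtain ⟨j, hj⟩ := mem_zpowers_iff.mp (zmodMulHom_mem_zpowers m c hc y)
    rw [← hi, ← hj]
    exact hac.zpow_zpow i j
  have ha_mem : a ∈ φ.range := ⟨(.ofAdd 1, 1), by simp [φ]⟩
  have hc_mem : c ∈ φ.range := ⟨(1, .ofAdd 1), by simp [φ]⟩
  refine nonempty_mulEquiv_of_le_range φ ?_ (by simp [hcard, Nat.card_eq_fintype_card])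
  rw [closure_le, Set.insert_subset_iff, Set.singleton_subset_iff]
  refine ⟨ha_mem, ?_⟩
  simpa [c] using mul_mem hc_mem (zpow_mem ha_mem k)

theorem upAction_ofAdd_natCast (p j : ℕ) (m : ZMod (p ^ 2)) :
    upAction p (.ofAdd (j : ZMod p)) (.ofAdd m) =
      .ofAdd (((1 + p : ℕ) : ZMod (p ^ 2)) ^ j * m) := by
  rw [← Int.cast_natCast]
  simp only [upAction, addAutToMulAut, MonoidHom.comp_apply, MonoidHom.mk'_apply,
    AddMonoidHom.coe_toMultiplicativeLeft, Function.comp_apply, toAdd_ofAdd, ZMod.lift_coe,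
    zmultiplesHom_apply, ← ofMul_zpow, zpow_natCast]
  rfl

theorem exists_upHom_closure_le {p : ℕ} [NeZero p] {a y : G} (ha : a ^ (p ^ 2) = 1)
    (hy : y ^ p = 1) (hya : y * a * y⁻¹ = a ^ (1 + p)) :
    ∃ φ : Up p →* G, closure {a, y} ≤ φ.range := by
  let f1 := zmodMulHom (p ^ 2) a ha
  let f2 := zmodMulHom p y hy
  have compat (g : Multiplicative (ZMod p)) :
      f1.comp (upAction p g).toMonoidHom = (MulAut.conj (f2 g)).toMonoidHom.comp f1 := by
    refine MonoidHom.ext fun x => ?_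
    rw [← ofAdd_toAdd g, ← ofAdd_toAdd x, ← ZMod.natCast_zmod_val g.toAdd,
      ← ZMod.natCast_zmod_val x.toAdd]
    simp only [MonoidHom.comp_apply, MulEquiv.coe_toMonoidHom, MulAut.conj_apply,
      upAction_ofAdd_natCast, ← Nat.cast_pow, ← Nat.cast_mul, f1, f2, zmodMulHom_ofAdd_natCast]
    rw [← conj_pow, conj_pow_eq_pow_pow hya, pow_mul]
  refine ⟨SemidirectProduct.lift f1 f2 compat, ?_⟩
  rw [closure_le, Set.insert_subset_iff, Set.singleton_subset_iff]
  exact ⟨⟨.inl (.ofAdd 1), by simp [f1]⟩, ⟨.inr (.ofAdd 1), by simp [f2]⟩⟩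

theorem card_Up (p : ℕ) : Nat.card (Up p) = p ^ 2 * p := by
  rw [SemidirectProduct.card, Nat.card_congr Multiplicative.toAdd,
    Nat.card_congr Multiplicative.toAdd, Nat.card_zmod, Nat.card_zmod]

theorem exists_conj_inv_pow_eq_pow_one_add {p : ℕ} (hp : p.Prime) {a b : G}
    (ha : orderOf a = p ^ 2) (hw : a⁻¹ * b⁻¹ * a * b ∈ zpowers (a ^ p))
    (hne : a⁻¹ * b⁻¹ * a * b ≠ 1) :
    ∃ s : ℕ, ¬ p ∣ s ∧ b⁻¹ ^ s * a * (b⁻¹ ^ s)⁻¹ = a ^ (1 + p) := by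
  have hfin : IsOfFinOrder (a ^ p) := (orderOf_pos_iff.mp (ha ▸ pow_pos hp.pos 2)).pow
  obtain ⟨d, hd : (a ^ p) ^ d = _⟩ := hfin.mem_powers_iff_mem_zpowers.mpr hw
  have hpd : ¬ p ∣ d := by
    rintro ⟨e, rfl⟩
    apply hne
    rw [← hd, ← pow_mul, ← mul_assoc, ← sq, pow_mul, ← ha, pow_orderOf_eq_one, one_pow]
  obtain ⟨s, -, hs⟩ :=
    Nat.exists_mul_mod_eq_one_of_coprime (hp.coprime_iff_not_dvd.mpr hpd).symm hp.one_lt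
  refine ⟨s, fun hps => ?_, ?_⟩
  · have := Nat.mod_eq_zero_of_dvd (dvd_mul_of_dvd_right hps d)
    omega
  have hconj : b⁻¹ * a * b⁻¹⁻¹ = a ^ (1 + p * d) := by
    rw [pow_add, pow_one, pow_mul, hd]; group
  rw [conj_pow_eq_pow_pow hconj, pow_eq_pow_iff_modEq, ha]
  calc (1 + p * d) ^ s ≡ 1 + s * (p * d) [MOD p ^ 2] := one_add_mul_pow_modEq p d s
    _ = 1 + p * (d * s) := by ring
    _ ≡ 1 + p * 1 [MOD p ^ 2] := by
        refine Nat.ModEq.add_left 1 ?_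
        rw [sq]
        exact Nat.ModEq.mul_left' p (hs.trans (Nat.mod_eq_of_lt hp.one_lt).symm)
    _ = 1 + p := by ring

theorem exists_pow_eq_one_conj_eq_pow_one_add {p : ℕ} (hp : p.Prime) (hodd : Odd p) {a b : G}
    (ha : orderOf a = p ^ 2) (hb : orderOf b = p ^ 2) (hbp : b ^ p ∈ zpowers (a ^ p))
    (hw : a⁻¹ * b⁻¹ * a * b ∈ zpowers (a ^ p)) (hne : a⁻¹ * b⁻¹ * a * b ≠ 1) :
    ∃ y, y ^ p = 1 ∧ y * a * y⁻¹ = a ^ (1 + p) ∧ b ∈ closure {a, y} := by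
  obtain ⟨s, hps, hx⟩ := exists_conj_inv_pow_eq_pow_one_add hp ha hw hne
  set x := b⁻¹ ^ s
  have hfin : IsOfFinOrder (a ^ p) := (orderOf_pos_iff.mp (ha ▸ pow_pos hp.pos 2)).pow
  have hxp : x ^ p ∈ zpowers (a ^ p) := by
    rw [← pow_mul, mul_comm, pow_mul, inv_pow]
    exact pow_mem (inv_mem hbp) s
  obtain ⟨t, ht : (a ^ p) ^ t = x ^ p⟩ := hfin.mem_powers_iff_mem_zpowers.mpr hxp
  set u := (a ^ t)⁻¹
  have hxu : x * u * x⁻¹ = u ^ (1 + p) := by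
    have hxat : x * a ^ t * x⁻¹ = (a ^ t) ^ (1 + p) := by
      rw [← conj_pow, hx, ← pow_mul, ← pow_mul, mul_comm]
    calc x * u * x⁻¹ = (x * a ^ t * x⁻¹)⁻¹ := by
          simp only [u, mul_inv_rev, inv_inv, mul_assoc]
      _ = u ^ (1 + p) := by rw [hxat, inv_pow]
  refine ⟨u * x, ?_, ?_, ?_⟩
  · have hsum : (a ^ t) ^ (∑ i ∈ range p, (1 + p) ^ i) = (a ^ p) ^ t := by
      rw [← pow_mul, ← pow_mul, pow_eq_pow_iff_modEq, ha, mul_comm p]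
      exact (sum_range_one_add_pow_modEq hodd).mul_left t
    rw [mul_pow_eq_pow_geomSum_mul_pow hxu, ← ht, inv_pow, hsum, inv_mul_cancel]
  · have hua : Commute u (a ^ (1 + p)) := ((Commute.refl a).pow_pow t (1 + p)).inv_left
    calc u * x * a * (u * x)⁻¹ = u * (x * a * x⁻¹) * u⁻¹ := by group
      _ = a ^ (1 + p) := by rw [hx, hua.eq, mul_inv_cancel_right]
  · have hx_mem : x ∈ closure {a, u * x} := by
      have hx_eq : a ^ t * (u * x) = x := by simp [u]
      have hmem : a ^ t * (u * x) ∈ closure {a, u * x} :=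
        mul_mem (pow_mem (subset_closure (by simp)) t) (subset_closure (by simp))
      rwa [hx_eq] at hmem
    have hb_inv : b⁻¹ ∈ zpowers x := by
      rw [mem_zpowers_pow_iff, orderOf_inv, hb]
      exact Nat.Coprime.pow_right 2 (hp.coprime_iff_not_dvd.mpr hps).symm
    exact inv_mem_iff.mp (zpowers_le.mpr hx_mem hb_inv)

theorem nonempty_mulEquiv_Up {p : ℕ} (hp : p.Prime) (hodd : Odd p) {a b : G}
    (ha : orderOf a = p ^ 2) (hb : orderOf b = p ^ 2) (hbp : b ^ p ∈ zpowers (a ^ p))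
    (hw : a⁻¹ * b⁻¹ * a * b ∈ zpowers (a ^ p)) (hne : a⁻¹ * b⁻¹ * a * b ≠ 1)
    (hcard : Nat.card (closure {a, b}) = p ^ 2 * p) : Nonempty (closure {a, b} ≃* Up p) := by
  have : NeZero p := ⟨hp.ne_zero⟩
  have : Finite (Up p) := Finite.of_equiv _ SemidirectProduct.equivProd.symm
  obtain ⟨y, hy, hya, hby⟩ := exists_pow_eq_one_conj_eq_pow_one_add hp hodd ha hb hbp hw hne
  obtain ⟨φ, hφ⟩ := exists_upHom_closure_le (ha ▸ pow_orderOf_eq_one a) hy hya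
  have hle : closure {a, b} ≤ closure {a, y} := by
    rw [closure_le, Set.insert_subset_iff, Set.singleton_subset_iff]
    exact ⟨subset_closure (by simp), hby⟩
  exact nonempty_mulEquiv_of_le_range φ (hle.trans hφ) (hcard.trans (card_Up p).symm)

end

/-- Let `p` be an odd prime, `G` a group, `z ∈ G` central of order `p`, and
`m̂₁, m̂₂ ∈ G` of order `p²` with `m̂₁^p, m̂₂^p ∈ ⟨z⟩`, whose commutator lies in `⟨z⟩` and
whose images in `G/⟨z⟩` generate a subgroup of order `p²`.  Then `⟨m̂₁, m̂₂⟩` is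
isomorphic to `ℤ/p²ℤ × ℤ/pℤ` or to `U_p`. -/
theorem lifts_of_order_p_squared_generate_ZpsqxZp_or_Up
    (p : ℕ) (hp : p.Prime) (hodd : p ≠ 2) {G : Type*} [Group G] (z m1 m2 : G)
    (hz : z ∈ Subgroup.center G) (hzord : orderOf z = p)
    (h1 : orderOf m1 = p ^ 2) (h2 : orderOf m2 = p ^ 2)
    (h1p : m1 ^ p ∈ Subgroup.zpowers z) (h2p : m2 ^ p ∈ Subgroup.zpowers z)
    (hcomm : m1⁻¹ * m2⁻¹ * m1 * m2 ∈ Subgroup.zpowers z) :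
    letI := zpowers_normal_of_mem_center hz
    Nat.card (Subgroup.closure
        {(QuotientGroup.mk m1 : G ⧸ Subgroup.zpowers z), QuotientGroup.mk m2}) = p ^ 2 →
    Nonempty (Subgroup.closure ({m1, m2} : Set G) ≃*
        (Multiplicative (ZMod (p ^ 2)) × Multiplicative (ZMod p))) ∨
    Nonempty (Subgroup.closure ({m1, m2} : Set G) ≃* Up p) := by
  have := zpowers_normal_of_mem_center hz
  intro hq
  have : NeZero p := ⟨hp.ne_zero⟩
  have hK : zpowers (m1 ^ p) = zpowers z := by
    have : Finite (zpowers z) := (orderOf_pos_iff.mp (hzord ▸ hp.pos)).finite_zpowers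
    refine eq_of_le_of_card_ge (zpowers_le.mpr h1p) ?_
    rw [Nat.card_zpowers, Nat.card_zpowers, hzord, orderOf_pow_of_dvd hp.ne_zero, h1,
      sq, Nat.mul_div_cancel _ hp.pos]
    exact h1 ▸ dvd_pow_self p two_ne_zero
  have hcard : Nat.card (closure {m1, m2}) = p ^ 2 * p := by
    have hKH : zpowers z ≤ closure {m1, m2} :=
      hK ▸ zpowers_le.mpr (pow_mem (subset_closure (by simp)) p)
    rw [card_eq_card_map_mk'_mul_card hKH, MonoidHom.map_closure, Set.image_pair,
      Nat.card_zpowers, hzord]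
    exact congrArg (· * p) hq
  rw [← hK] at h2p hcomm
  by_cases hab : m1⁻¹ * m2⁻¹ * m1 * m2 = 1
  · have hcomm12 : Commute m1 m2 := Commute.inv_inv_iff.mp <|
      commutatorElement_eq_one_iff_commute.mp (by rwa [commutatorElement_def, inv_inv, inv_inv])
    exact .inl (nonempty_mulEquiv_prod_of_commute hcomm12 (h1 ▸ pow_orderOf_eq_one m1) h2p hcard)
  · exact .inr (nonempty_mulEquiv_Up hp (hp.odd_of_ne_two hodd) h1 h2 h2p hcomm hab hcard)
end

section
/- Let Ĝ be a group and z ∈ Ĝ a central element of order 2 such that Q = Ĝ/⟨z⟩ is an elementary abelian 2-group. Let V ⊆ Q be the set of elements all of whose lifts to Ĝ have order dividing 2. Then V is a subgroup of Q if and only if the preimage V̂ of V in Ĝ is an abelian subgroup of Ĝ; in that case V̂ is an elementary abelian 2-group isomorphic to V × ℤ/2ℤ. -/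
theorem mul_comm_of_sq_eq_one {G : Type*} [Group G] {a b : G} (ha : a ^ 2 = 1) (hb : b ^ 2 = 1)
    (hab : (a * b) ^ 2 = 1) : a * b = b * a := by
  have inv_eq_self {x : G} (hx : x ^ 2 = 1) : x⁻¹ = x :=
    inv_eq_of_mul_eq_one_right (by rwa [← sq])
  rw [← inv_eq_self hab, mul_inv_rev, inv_eq_self ha, inv_eq_self hb]

theorem sq_eq_one_of_mem_zpowers {G : Type*} [Group G] {z : G} (hz : z ^ 2 = 1) :
    ∀ n ∈ Subgroup.zpowers z, n ^ 2 = 1 := by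
  rintro _ ⟨k, rfl⟩
  rw [← zpow_natCast, ← zpow_mul, mul_comm, zpow_mul, zpow_natCast, hz, one_zpow]

theorem MonoidHom.nonempty_mulEquiv_prod_ker {A B : Type*} [CommGroup A] [Group B]
    (hA : ∀ a : A, a ^ 2 = 1) (f : A →* B) (hf : Function.Surjective f) :
    Nonempty (A ≃* B × f.ker) := by
  have hB (b c : B) : b * c = c * b := by
    obtain ⟨a, rfl⟩ := hf b
    obtain ⟨a', rfl⟩ := hf c
    rw [← map_mul, mul_comm, map_mul]
  let _ : CommGroup B := { mul_comm := hB }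
  let _ : Module (ZMod 2) (Additive A) := AddCommGroup.zmodModule fun a => hA a.toMul
  let _ : Module (ZMod 2) (Additive B) := AddCommGroup.zmodModule fun b => by
    obtain ⟨a, rfl⟩ := hf b.toMul
    exact (map_pow f a 2).symm.trans ((congrArg f (hA a)).trans f.map_one)
  let f' : Additive A →ₗ[ZMod 2] Additive B := f.toAdditive.toZModLinearMap 2
  obtain ⟨U, hU⟩ := (LinearMap.ker f').exists_isCompl
  let e := f'.equivProdOfSurjectiveOfIsCompl ((LinearMap.ker f').projectionOnto U hU)
    (LinearMap.range_eq_top.mpr hf) (Submodule.range_projectionOnto hU)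
    (by rwa [Submodule.ker_projectionOnto])
  -- `Additive B × LinearMap.ker f'` is definitionally `Additive (B × f.ker)`.
  exact ⟨MulEquiv.toAdditive.symm (e.toAddEquiv.trans (AddEquiv.refl _))⟩

def MonoidHom.subgroupComapKerEquiv {G G' : Type*} [Group G] [Group G'] (f : G →* G')
    (H' : Subgroup G') : (f.subgroupComap H').ker ≃* f.ker :=
  (MulEquiv.subgroupCongr (by ext; exact Subtype.ext_iff)).trans
    (Subgroup.subgroupOfEquivOfLe (f.ker_le_comap H'))

namespace QuotientGroup

variable {G : Type*} [Group G] {N : Subgroup G}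

variable (N) in
def sqEqOneClasses : Set (G ⧸ N) := {m | ∀ g : G, (g : G ⧸ N) = m → g ^ 2 = 1}

theorem sq_eq_sq_of_mk_eq (hN : N ≤ Subgroup.center G) (hN2 : ∀ n ∈ N, n ^ 2 = 1) {a b : G}
    (h : (a : G ⧸ N) = b) : a ^ 2 = b ^ 2 := by
  have hn : a⁻¹ * b ∈ N := QuotientGroup.eq.mp h
  have hcomm : Commute a (a⁻¹ * b) := Subgroup.mem_center_iff.mp (hN hn) a
  calc a ^ 2 = a ^ 2 * (a⁻¹ * b) ^ 2 := by rw [hN2 _ hn, mul_one]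
    _ = (a * (a⁻¹ * b)) ^ 2 := (hcomm.mul_pow 2).symm
    _ = b ^ 2 := by rw [mul_inv_cancel_left]

theorem mk_mem_sqEqOneClasses_iff (hN : N ≤ Subgroup.center G) (hN2 : ∀ n ∈ N, n ^ 2 = 1)
    {a : G} : (a : G ⧸ N) ∈ sqEqOneClasses N ↔ a ^ 2 = 1 :=
  ⟨fun ha => ha a rfl, fun ha _ hg => (sq_eq_sq_of_mk_eq hN hN2 hg).trans ha⟩

theorem preimage_sqEqOneClasses (hN : N ≤ Subgroup.center G) (hN2 : ∀ n ∈ N, n ^ 2 = 1) :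
    (↑) ⁻¹' sqEqOneClasses N = {a : G | a ^ 2 = 1} :=
  Set.ext fun _ => mk_mem_sqEqOneClasses_iff hN hN2

variable [N.Normal]

theorem mul_comm_of_coe_eq_sqEqOneClasses (hN : N ≤ Subgroup.center G)
    (hN2 : ∀ n ∈ N, n ^ 2 = 1) {W : Subgroup (G ⧸ N)}
    (hW : (W : Set (G ⧸ N)) = sqEqOneClasses N) {a b : G} (ha : a ^ 2 = 1) (hb : b ^ 2 = 1) :
    a * b = b * a := by
  have hmem {g : G} (hg : g ^ 2 = 1) : (g : G ⧸ N) ∈ W := by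
    rwa [← SetLike.mem_coe, hW, mk_mem_sqEqOneClasses_iff hN hN2]
  have hab : ((a * b : G) : G ⧸ N) ∈ sqEqOneClasses N := hW ▸ mul_mem (hmem ha) (hmem hb)
  exact mul_comm_of_sq_eq_one ha hb ((mk_mem_sqEqOneClasses_iff hN hN2).mp hab)

theorem exists_subgroup_coe_eq_sqEqOneClasses (hN : N ≤ Subgroup.center G)
    (hN2 : ∀ n ∈ N, n ^ 2 = 1)
    (hcomm : ∀ a : G, a ^ 2 = 1 → ∀ b : G, b ^ 2 = 1 → a * b = b * a) :
    ∃ W : Subgroup (G ⧸ N), (W : Set (G ⧸ N)) = sqEqOneClasses N := by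
  have hmem (a : G) := mk_mem_sqEqOneClasses_iff hN hN2 (a := a)
  refine ⟨{ carrier := sqEqOneClasses N
            one_mem' := ?one
            mul_mem' := ?mul
            inv_mem' := ?inv }, rfl⟩
  case one => exact (hmem 1).mpr (one_pow 2)
  case mul =>
    simp only [QuotientGroup.forall_mk, ← QuotientGroup.mk_mul, hmem]
    intro a b ha hb
    rw [Commute.mul_pow (hcomm a ha b hb), ha, hb, one_mul]
  case inv =>
    simp only [QuotientGroup.forall_mk, ← QuotientGroup.mk_inv, hmem]
    intro a ha
    rw [inv_pow, ha, inv_one]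

theorem coe_comap_of_coe_eq_sqEqOneClasses (hN : N ≤ Subgroup.center G)
    (hN2 : ∀ n ∈ N, n ^ 2 = 1) {W : Subgroup (G ⧸ N)}
    (hW : (W : Set (G ⧸ N)) = sqEqOneClasses N) :
    (W.comap (mk' N) : Set G) = {a | a ^ 2 = 1} := by
  rw [Subgroup.coe_comap, hW]
  exact preimage_sqEqOneClasses hN hN2

theorem nonempty_comap_mulEquiv_prod (hN : N ≤ Subgroup.center G)
    (hN2 : ∀ n ∈ N, n ^ 2 = 1) {W : Subgroup (G ⧸ N)}
    (hW : (W : Set (G ⧸ N)) = sqEqOneClasses N) :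
    Nonempty (W.comap (mk' N) ≃* W × N) := by
  have hsq (a : W.comap (mk' N)) : (a : G) ^ 2 = 1 :=
    (Set.ext_iff.mp (coe_comap_of_coe_eq_sqEqOneClasses hN hN2 hW) a).mp a.2
  have hcomm (a b : W.comap (mk' N)) : a * b = b * a :=
    Subtype.ext (mul_comm_of_coe_eq_sqEqOneClasses hN hN2 hW (hsq a) (hsq b))
  let _ : CommGroup (W.comap (mk' N)) := { mul_comm := hcomm }
  obtain ⟨e⟩ := ((mk' N).subgroupComap W).nonempty_mulEquiv_prod_ker
    (fun a => Subtype.ext (hsq a))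
    ((mk' N).subgroupComap_surjective_of_surjective W (mk'_surjective N))
  exact ⟨e.trans (MulEquiv.prodCongr (MulEquiv.refl W)
    ((MonoidHom.subgroupComapKerEquiv _ W).trans (MulEquiv.subgroupCongr (ker_mk' N))))⟩

end QuotientGroup

open QuotientGroup in
/-- Let `Ĝ` be a group, `z ∈ Ĝ` central of order 2 with `Q = Ĝ/⟨z⟩`
elementary abelian 2-group.  Let `V ⊆ Q` be the set of elements whose lifts all have
order dividing 2 and `V̂ ⊆ Ĝ` the preimage of `V`.  Then `V` is a subgroup of `Q` iff
`V̂` is an abelian subset of `Ĝ`; in that case `V̂` is an elementary abelian 2-group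
isomorphic to `V × ℤ/2ℤ`. -/
theorem V_subgroup_iff_preimage_abelian
    {Ghat : Type*} [Group Ghat] (z : Ghat)
    (hz : z ∈ Subgroup.center Ghat) (hzord : orderOf z = 2) :
    letI := zpowers_normal_of_mem_center hz
    ∀ (_ : ∀ a b : Ghat ⧸ Subgroup.zpowers z, a * b = b * a)
      (_ : ∀ a : Ghat ⧸ Subgroup.zpowers z, a ^ 2 = 1),
    letI V : Set (Ghat ⧸ Subgroup.zpowers z) :=
      {m | ∀ g : Ghat, (QuotientGroup.mk g : Ghat ⧸ Subgroup.zpowers z) = m → g ^ 2 = 1}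
    letI Vhat : Set Ghat := (QuotientGroup.mk : Ghat → Ghat ⧸ Subgroup.zpowers z) ⁻¹' V
    ((∃ W : Subgroup (Ghat ⧸ Subgroup.zpowers z), (W : Set _) = V) ↔
      (∀ a ∈ Vhat, ∀ b ∈ Vhat, a * b = b * a)) ∧
    (∀ W : Subgroup (Ghat ⧸ Subgroup.zpowers z), (W : Set _) = V →
      (∀ a ∈ Vhat, a ^ 2 = 1) ∧ (∀ a ∈ Vhat, ∀ b ∈ Vhat, a * b = b * a) ∧
      ∃ What : Subgroup Ghat, (What : Set Ghat) = Vhat ∧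
        Nonempty (What ≃* (W × Multiplicative (ZMod 2)))) := by
  intro _ _
  have := zpowers_normal_of_mem_center hz
  have hN : Subgroup.zpowers z ≤ Subgroup.center Ghat := Subgroup.zpowers_le.mpr hz
  have hN2 := sq_eq_one_of_mem_zpowers (hzord ▸ pow_orderOf_eq_one z)
  rw [← sqEqOneClasses.eq_1, preimage_sqEqOneClasses hN hN2]
  refine ⟨⟨fun ⟨W, hW⟩ _ ha _ hb => mul_comm_of_coe_eq_sqEqOneClasses hN hN2 hW ha hb,
    exists_subgroup_coe_eq_sqEqOneClasses hN hN2⟩, fun W hW => ⟨fun _ ha => ha,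
    fun _ ha _ hb => mul_comm_of_coe_eq_sqEqOneClasses hN hN2 hW ha hb, ?_⟩⟩
  have hZ2 : Subgroup.zpowers z ≃* Multiplicative (ZMod 2) :=
    mulEquivOfPrimeCardEq (by rw [Nat.card_zpowers, hzord]) (by simp)
  obtain ⟨e⟩ := nonempty_comap_mulEquiv_prod hN hN2 hW
  exact ⟨W.comap (mk' _), coe_comap_of_coe_eq_sqEqOneClasses hN hN2 hW,
    ⟨e.trans (MulEquiv.prodCongr (MulEquiv.refl W) hZ2)⟩⟩
end

section
/- Let Ĝ be a group and z ∈ Ĝ a central element of order 2 such that Q = Ĝ/⟨z⟩ is an elementary abelian 2-group. Let V ⊆ Q be the set of elements all of whose lifts to Ĝ have order dividing 2. Assume: (a) for every pair m₁, m₂ ∈ Q∖V with ⟨m₁⟩ ≠ ⟨m₂⟩, the subgroup ⟨m₁,m₂⟩ contains a nonidentity element of V; and (c) V is a subgroup of Q. Then Ĝ is abelian. -/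
lemma zpowers_of_sq_one' {G : Type*} [Group G] {u : G} (h : u ^ 2 = 1) {w : G}
    (hw : w ∈ Subgroup.zpowers u) : w = 1 ∨ w = u := by
  obtain ⟨k, rfl⟩ := hw
  rcases Int.even_or_odd k with ⟨j, rfl⟩ | ⟨j, rfl⟩
  · left
    show u ^ (j+j) = 1
    rw [show j + j = 2 * j by ring, zpow_mul, show u ^ (2:ℤ) = u ^ 2 by norm_cast, h, one_zpow]
  · right
    show u ^ (2*j+1) = u
    rw [zpow_add, zpow_mul, show u ^ (2:ℤ) = u ^ 2 by norm_cast, h, one_zpow, one_mul, zpow_one]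

lemma mem_closure_pair_four {Q : Type*} [Group Q] {m1 m2 : Q}
    (hc : m1 * m2 = m2 * m1) (h1 : m1 * m1 = 1) (h2 : m2 * m2 = 1)
    {v : Q} (hv : v ∈ Subgroup.closure {m1, m2}) :
    v = 1 ∨ v = m1 ∨ v = m2 ∨ v = m1 * m2 := by
  have f1 : ∀ x, x = m1 → x * (m1 * m2) = m2 := by
    rintro x rfl; rw [← mul_assoc, h1, one_mul]
  have f2 : m2 * (m1 * m2) = m1 := by rw [hc, ← mul_assoc, h2, one_mul]
  have f3 : (m1 * m2) * m1 = m2 := by rw [mul_assoc, ← hc, ← mul_assoc, h1, one_mul]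
  have f4 : (m1 * m2) * m2 = m1 := by rw [mul_assoc, h2, mul_one]
  have f5 : (m1 * m2) * (m1 * m2) = 1 := by
    rw [show (m1*m2)*(m1*m2) = m1*(m2*(m1*m2)) by group, f2, h1]
  induction hv using Subgroup.closure_induction with
  | mem x hx => rcases hx with rfl | rfl <;> tauto
  | one => tauto
  | mul x y hx hy ihx ihy =>
      rcases ihx with rfl | rfl | rfl | rfl <;> rcases ihy with rfl | rfl | rfl | rfl <;>
        (try simp only [one_mul, mul_one, h1, h2, f1 _ rfl, f2, f3, f4, f5]) <;> tauto
  | inv x hx ih =>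
      rcases ih with rfl | rfl | rfl | rfl
      · left; exact inv_one
      · right; left; exact inv_eq_of_mul_eq_one_right h1
      · right; right; left; exact inv_eq_of_mul_eq_one_right h2
      · right; right; right; exact inv_eq_of_mul_eq_one_right f5

/-- Let `Ĝ` be a group, `z ∈ Ĝ` central of order 2 with `Q = Ĝ/⟨z⟩` an
elementary abelian 2-group, and `V ⊆ Q` the set of elements whose lifts all have order
dividing 2.  Assume (a) for all `m₁, m₂ ∈ Q∖V` with `⟨m₁⟩ ≠ ⟨m₂⟩`, `⟨m₁, m₂⟩` contains
a nonidentity element of `V`, and (c) `V` is a subgroup of `Q`.  Then `Ĝ` is abelian. -/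
theorem central_extension_abelian_of_V_subgroup
    {Ghat : Type*} [Group Ghat] (z : Ghat)
    (hz : z ∈ Subgroup.center Ghat) (hzord : orderOf z = 2) :
    letI := zpowers_normal_of_mem_center hz
    ∀ (_ : ∀ a b : Ghat ⧸ Subgroup.zpowers z, a * b = b * a)
      (_ : ∀ a : Ghat ⧸ Subgroup.zpowers z, a ^ 2 = 1),
    letI V : Set (Ghat ⧸ Subgroup.zpowers z) :=
      {m | ∀ g : Ghat, (QuotientGroup.mk g : Ghat ⧸ Subgroup.zpowers z) = m → g ^ 2 = 1}
    (∀ m1 m2 : Ghat ⧸ Subgroup.zpowers z, m1 ∉ V → m2 ∉ V →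
        Subgroup.zpowers m1 ≠ Subgroup.zpowers m2 →
        ∃ v ∈ Subgroup.closure {m1, m2}, v ∈ V ∧ v ≠ 1) →
    (∃ W : Subgroup (Ghat ⧸ Subgroup.zpowers z), (W : Set _) = V) →
    ∀ a b : Ghat, a * b = b * a := by
  intro hQab hQ2 ha hWex a b
  haveI := zpowers_normal_of_mem_center hz
  obtain ⟨W, hW⟩ := hWex
  set Q := Ghat ⧸ Subgroup.zpowers z with hQdef
  -- basic facts about z
  have hz2 : z ^ 2 = 1 := by rw [← hzord]; exact pow_orderOf_eq_one z
  have hz1 : z ≠ 1 := by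
    intro h; rw [h, orderOf_one] at hzord; omega
  have hzz : z * z = 1 := by rw [← pow_two]; exact hz2
  have hzinv : z⁻¹ = z := inv_eq_of_mul_eq_one_right hzz
  have hzc : ∀ g : Ghat, g * z = z * g := Subgroup.mem_center_iff.mp hz
  have hmem : ∀ w ∈ Subgroup.zpowers z, w = 1 ∨ w = z := fun w hw => zpowers_of_sq_one' hz2 hw
  -- squares of elements in the same coset agree
  have hsqc : ∀ g h : Ghat, (QuotientGroup.mk g : Q) = QuotientGroup.mk h → g ^ 2 = h ^ 2 := by
    intro g h hgh
    have : g⁻¹ * h ∈ Subgroup.zpowers z := (QuotientGroup.eq).mp hgh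
    rcases hmem _ this with h1 | h1
    · have : h = g := by rw [← one_mul h, ← mul_inv_cancel g, mul_assoc, h1, mul_one]
      rw [this]
    · have hh : h = g * z := by
        rw [← h1]; rw [← mul_assoc, mul_inv_cancel, one_mul]
      have key : (g * z) ^ 2 = g ^ 2 := by
        rw [pow_two, pow_two, mul_assoc g z (g*z), ← mul_assoc z g z, ← hzc g,
          mul_assoc g z z, hzz, mul_one]
      rw [hh, key]
  -- membership in V
  have memV : ∀ g : Ghat,
      ((QuotientGroup.mk g : Q) ∈ {m : Q | ∀ g' : Ghat, (QuotientGroup.mk g' : Q) = m → g' ^ 2 = 1}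
        ↔ g ^ 2 = 1) := by
    intro g
    constructor
    · intro hv; exact hv g rfl
    · intro hg g' hg'; rw [hsqc g' g hg']; exact hg
  -- membership in W
  have memW : ∀ m : Q, m ∈ W ↔ ∀ g' : Ghat, (QuotientGroup.mk g' : Q) = m → g' ^ 2 = 1 := by
    intro m
    rw [← SetLike.mem_coe, hW]
    rfl
  -- commutator
  have hcmem : a⁻¹ * b⁻¹ * a * b ∈ Subgroup.zpowers z := by
    rw [← QuotientGroup.eq_one_iff]
    simp only [QuotientGroup.mk_mul, QuotientGroup.mk_inv]
    rw [mul_assoc, hQab (QuotientGroup.mk a) (QuotientGroup.mk b)]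
    group
  have mkmul : (QuotientGroup.mk (a * b) : Q) = QuotientGroup.mk a * QuotientGroup.mk b := by
    simp [QuotientGroup.mk_mul]
  have hWa_of : ∀ g : Ghat, g ^ 2 = 1 → (QuotientGroup.mk g : Q) ∈ W :=
    fun g hg => (memW _).mpr (fun g' hg' => by rw [hsqc g' g hg']; exact hg)
  have hW_to : ∀ g : Ghat, (QuotientGroup.mk g : Q) ∈ W → g ^ 2 = 1 :=
    fun g hg => (memW _).mp hg g rfl
  have hsqmem : ∀ g : Ghat, g ^ 2 ∈ Subgroup.zpowers z := by
    intro g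
    rw [← QuotientGroup.eq_one_iff]
    have h : (QuotientGroup.mk (g ^ 2) : Q) = (QuotientGroup.mk g : Q) ^ 2 := by
      rw [pow_two, pow_two, QuotientGroup.mk_mul]
    rw [h]; exact hQ2 _
  rcases hmem _ hcmem with hc1 | hcz
  · -- commutator is trivial
    calc a * b = b * a * (a⁻¹ * b⁻¹ * a * b) := by group
      _ = b * a := by rw [hc1, mul_one]
  · -- commutator is z : derive a contradiction
    exfalso
    have hab : b * a * z = a * b := by rw [← hcz]; group
    have habz : b * a = a * b * z⁻¹ := by rw [← hab]; group
    have hsq : (a * b) ^ 2 = a ^ 2 * b ^ 2 * z := by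
      calc (a * b) ^ 2 = (a * b) * (a * b) := pow_two _
        _ = a * (b * a) * b := by group
        _ = a * (a * b * z⁻¹) * b := by rw [habz]
        _ = a * (a * b * z) * b := by rw [hzinv]
        _ = a * ((a * b) * (z * b)) := by group
        _ = a * ((a * b) * (b * z)) := by rw [hzc b]
        _ = a ^ 2 * b ^ 2 * z := by rw [pow_two, pow_two]; group
    rcases hmem _ (hsqmem a) with haa | haa <;> rcases hmem _ (hsqmem b) with hbb | hbb
    · -- a² = 1, b² = 1
      have hWab : (QuotientGroup.mk (a * b) : Q) ∈ W := by
        rw [mkmul]; exact W.mul_mem (hWa_of a haa) (hWa_of b hbb)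
      have h1 := hW_to _ hWab
      rw [hsq, haa, hbb, one_mul, one_mul] at h1
      exact hz1 h1
    · -- a² = 1, b² = z
      have hab2 : (a * b) ^ 2 = 1 := by rw [hsq, haa, hbb, one_mul, hzz]
      have hWb : (QuotientGroup.mk b : Q) ∈ W := by
        have h := W.mul_mem (W.inv_mem (hWa_of a haa)) (hWa_of _ hab2)
        rw [mkmul, inv_mul_cancel_left] at h
        exact h
      have h := hW_to b hWb
      rw [hbb] at h
      exact hz1 h
    · -- a² = z, b² = 1
      have hab2 : (a * b) ^ 2 = 1 := by rw [hsq, haa, hbb, mul_one, hzz]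
      have hWa : (QuotientGroup.mk a : Q) ∈ W := by
        have h := W.mul_mem (hWa_of _ hab2) (W.inv_mem (hWa_of b hbb))
        rw [mkmul, mul_inv_cancel_right] at h
        exact h
      have h := hW_to a hWa
      rw [haa] at h
      exact hz1 h
    · -- a² = z, b² = z
      have hab2 : (a * b) ^ 2 = z := by rw [hsq, haa, hbb, hzz, one_mul]
      have hm1V : (QuotientGroup.mk a : Q) ∉
          {m : Q | ∀ g : Ghat, (QuotientGroup.mk g : Q) = m → g ^ 2 = 1} := by
        intro hv
        have h := hv a rfl
        rw [haa] at h
        exact hz1 h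
      have hm2V : (QuotientGroup.mk b : Q) ∉
          {m : Q | ∀ g : Ghat, (QuotientGroup.mk g : Q) = m → g ^ 2 = 1} := by
        intro hv
        have h := hv b rfl
        rw [hbb] at h
        exact hz1 h
      have hne : Subgroup.zpowers (QuotientGroup.mk a : Q) ≠
          Subgroup.zpowers (QuotientGroup.mk b : Q) := by
        intro heq
        have hmem2 : (QuotientGroup.mk a : Q) ∈ Subgroup.zpowers (QuotientGroup.mk b : Q) := by
          rw [← heq]; exact Subgroup.mem_zpowers _
        rcases zpowers_of_sq_one' (hQ2 (QuotientGroup.mk b)) hmem2 with h1 | h1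
        · have hzp : a ∈ Subgroup.zpowers z := (QuotientGroup.eq_one_iff a).mp h1
          rcases hmem _ hzp with rfl | rfl
          · rw [one_pow] at haa; exact hz1 haa.symm
          · rw [hz2] at haa; exact hz1 haa.symm
        · have hw : a⁻¹ * b ∈ Subgroup.zpowers z := (QuotientGroup.eq).mp h1
          have hcomm : b * a = a * b := by
            have hb : b = a * (a⁻¹ * b) := by rw [← mul_assoc, mul_inv_cancel, one_mul]
            rcases hmem _ hw with h2 | h2
            · rw [hb, h2]; group
            · rw [hb, h2, mul_assoc, ← hzc]
          rw [hcomm] at hab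
          exact hz1 (mul_left_cancel (show (a * b) * z = (a * b) * 1 by rw [mul_one]; exact hab))
      obtain ⟨v, hvcl, hvV, hvne⟩ := ha (QuotientGroup.mk a) (QuotientGroup.mk b) hm1V hm2V hne
      have hcomm12 : (QuotientGroup.mk a : Q) * QuotientGroup.mk b
          = QuotientGroup.mk b * QuotientGroup.mk a := hQab _ _
      have h11 : (QuotientGroup.mk a : Q) * QuotientGroup.mk a = 1 := by
        rw [← pow_two]; exact hQ2 _
      have h22 : (QuotientGroup.mk b : Q) * QuotientGroup.mk b = 1 := by
        rw [← pow_two]; exact hQ2 _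
      rcases mem_closure_pair_four hcomm12 h11 h22 hvcl with rfl | rfl | rfl | rfl
      · exact hvne rfl
      · exact hm1V hvV
      · exact hm2V hvV
      · have h := hvV (a * b) mkmul
        rw [hab2] at h
        exact hz1 h
end

section
/- Let p be an odd prime, G a group, and x, y ∈ G elements with y^{p²} = 1 and x y x⁻¹ = y^{1+ap} for some integer a. Then (xy)^p = y^p x^p. -/
/-!
Pushing each `x` to the right with `x y x⁻¹ = y ^ c`, `c = 1 + a p`, gives
`(x y) ^ p = y ^ (c (1 + c + ⋯ + c ^ (p - 1))) * x ^ p`. Modulo `p²` we have `c ^ i ≡ 1 + i a p`,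
so the exponent is `≡ p + a p · p (p + 1) / 2`, and for odd `p` the second term is a multiple of `p²`.
-/

open Finset

section Conjugation

variable {G : Type*} [Group G] {x y : G} {c : ℤ}

theorem mul_zpow_eq_zpow_mul_of_conj_eq (h : x * y * x⁻¹ = y ^ c) (m : ℤ) :
    x * y ^ m = y ^ (c * m) * x := by
  rw [zpow_mul, ← h, conj_zpow, inv_mul_cancel_right]

theorem mul_pow_eq_zpow_geom_sum_mul_pow_of_conj_eq (h : x * y * x⁻¹ = y ^ c) (n : ℕ) :
    (x * y) ^ n = y ^ (c * ∑ i ∈ range n, c ^ i) * x ^ n := by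
  induction n with
  | zero => simp
  | succ n ih =>
    calc (x * y) ^ (n + 1) = x * y ^ (1 + c * ∑ i ∈ range n, c ^ i) * x ^ n := by
          rw [pow_succ', ih, zpow_one_add]; simp only [mul_assoc]
      _ = y ^ (c * (1 + c * ∑ i ∈ range n, c ^ i)) * x ^ (n + 1) := by
          rw [mul_zpow_eq_zpow_mul_of_conj_eq h, mul_assoc, ← pow_succ']
      _ = y ^ (c * ∑ i ∈ range (n + 1), c ^ i) * x ^ (n + 1) := by
          rw [geom_sum_succ, add_comm 1]

end Conjugation

theorem sq_dvd_mul_geom_sum_sub {R : Type*} [CommRing R] {p : ℕ} (hp : Odd p) (a : R) :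
    (p : R) ^ 2 ∣ (1 + a * p) * ∑ i ∈ range p, (1 + a * p) ^ i - p := by
  have hsum : (p : R) ^ 2 ∣ ∑ i ∈ range p, (1 + a * p) ^ i - p := by
    simpa [mul_comm a] using odd_sq_dvd_geom_sum₂_sub (1 : R) a hp
  have hsplit : (1 + a * p) * ∑ i ∈ range p, (1 + a * p) ^ i - p
      = (1 + a * p) * (∑ i ∈ range p, (1 + a * p) ^ i - p) + a * p ^ 2 := by ring
  rw [hsplit]
  exact dvd_add (dvd_mul_of_dvd_right hsum _) (dvd_mul_left _ _)

theorem xy_pow_p_eq_yp_xp_general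
    (p : ℕ) (hodd : Odd p) (G : Type*) [Group G]
    (x y : G) (a : ℤ)
    (hy : y ^ (p ^ 2) = 1)
    (hconj : x * y * x⁻¹ = y ^ ((1 : ℤ) + a * p)) :
    (x * y) ^ p = y ^ p * x ^ p := by
  have hord : (orderOf y : ℤ) ∣ (p : ℤ) ^ 2 := by exact_mod_cast orderOf_dvd_of_pow_eq_one hy
  have hexp : (1 + a * p) * ∑ i ∈ range p, (1 + a * p) ^ i ≡ p [ZMOD orderOf y] :=
    (Int.modEq_iff_dvd.mpr (dvd_sub_comm.mp (sq_dvd_mul_geom_sum_sub hodd a))).of_dvd hord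
  rw [mul_pow_eq_zpow_geom_sum_mul_pow_of_conj_eq hconj, zpow_eq_zpow_iff_modEq.mpr hexp,
    zpow_natCast]

/-- Let `p` be an odd prime, `G` a group, and `x, y ∈ G` with `y^(p²) = 1`
and `x y x⁻¹ = y^(1 + a p)` for some integer `a`.  Then `(x y)^p = y^p x^p`. -/
theorem xy_pow_p_eq_yp_xp
    (p : ℕ) (hp : p.Prime) (hodd : Odd p) (G : Type*) [Group G]
    (x y : G) (a : ℤ)
    (hy : y ^ (p ^ 2) = 1)
    (hconj : x * y * x⁻¹ = y ^ ((1 : ℤ) + a * p)) :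
    (x * y) ^ p = y ^ p * x ^ p :=
  xy_pow_p_eq_yp_xp_general p hodd G x y a hy hconj
end

section
/- The alternating group A₅ is 2-gcomplete: if K is a subgroup of A₅ such that for every element g ∈ A₅ of odd order the conjugacy class of g has nonempty intersection with K, then K = A₅. -/
open Equiv

/-- `A₅` is 2-gcomplete: a subgroup of `A₅` meeting the conjugacy class of
every element of odd order is all of `A₅`. -/
theorem alternatingGroup_five_two_gcomplete
    (K : Subgroup (alternatingGroup (Fin 5)))
    (h : ∀ g : alternatingGroup (Fin 5), Odd (orderOf g) → ∃ k ∈ K, IsConj g k) :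
    K = ⊤ := by
  classical
  haveI : Fact (Nat.Prime 3) := ⟨by norm_num⟩
  haveI : Fact (Nat.Prime 5) := ⟨by norm_num⟩
  have hcard : Nat.card (alternatingGroup (Fin 5)) = 60 := by
    have h2 := two_mul_card_alternatingGroup (α := Fin 5)
    rw [Fintype.card_perm] at h2
    simp only [Fintype.card_fin] at h2
    rw [show Nat.factorial 5 = 120 from rfl] at h2
    rw [Nat.card_eq_fintype_card]
    omega
  -- elements of order 3 and 5
  have mem3 : Equiv.swap 0 1 * Equiv.swap 0 2 ∈ alternatingGroup (Fin 5) := by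
    rw [Equiv.Perm.mem_alternatingGroup]; decide
  have mem5 : finRotate 5 ∈ alternatingGroup (Fin 5) := by
    rw [Equiv.Perm.mem_alternatingGroup]; decide
  have ha3 : orderOf (⟨Equiv.swap 0 1 * Equiv.swap 0 2, mem3⟩ : alternatingGroup (Fin 5)) = 3 := by
    rw [Subgroup.orderOf_mk]
    exact orderOf_eq_prime (by decide) (by decide)
  have ha5 : orderOf (⟨finRotate 5, mem5⟩ : alternatingGroup (Fin 5)) = 5 := by
    rw [Subgroup.orderOf_mk]
    exact orderOf_eq_prime (by decide) (by decide)
  have h3 : (3 : ℕ) ∣ Nat.card K := by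
    obtain ⟨k, hk, hc⟩ := h _ (by rw [ha3]; decide)
    obtain ⟨c, hc⟩ := hc
    have := K.orderOf_dvd_natCard hk
    rwa [← hc.orderOf_eq, ha3] at this
  have h5 : (5 : ℕ) ∣ Nat.card K := by
    obtain ⟨k, hk, hc⟩ := h _ (by rw [ha5]; decide)
    obtain ⟨c, hc⟩ := hc
    have := K.orderOf_dvd_natCard hk
    rwa [← hc.orderOf_eq, ha5] at this
  have h15 : (15 : ℕ) ∣ Nat.card K := (Nat.Coprime.mul_dvd_of_dvd_of_dvd (by norm_num) h3 h5)
  have hmul : Nat.card K * K.index = 60 := by rw [Subgroup.card_mul_index, hcard]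
  obtain ⟨m, hm⟩ := h15
  have hidx4 : K.index ≤ 4 := by
    have : K.index ∣ 4 := ⟨m, by nlinarith⟩
    exact Nat.le_of_dvd (by norm_num) this
  rcases IsSimpleGroup.eq_bot_or_eq_top_of_normal K.normalCore K.normalCore_normal with hb | ht
  · exfalso
    have hker : (MulAction.toPermHom (alternatingGroup (Fin 5))
        (alternatingGroup (Fin 5) ⧸ K)).ker = ⊥ := by
      rw [← Subgroup.normalCore_eq_ker, hb]
    have hinj := (MulAction.toPermHom (alternatingGroup (Fin 5))
        (alternatingGroup (Fin 5) ⧸ K)).ker_eq_bot_iff.mp hker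
    have hdvd : Nat.card (alternatingGroup (Fin 5)) ∣
        Nat.card (Perm (alternatingGroup (Fin 5) ⧸ K)) :=
      Subgroup.card_dvd_of_injective _ hinj
    haveI : Fintype (alternatingGroup (Fin 5) ⧸ K) := Fintype.ofFinite _
    rw [hcard, Nat.card_eq_fintype_card, Fintype.card_perm, ← Nat.card_eq_fintype_card] at hdvd
    have heq : Nat.card (alternatingGroup (Fin 5) ⧸ K) = K.index := rfl
    rw [heq] at hdvd
    have hle : Nat.factorial K.index ≤ Nat.factorial 4 := Nat.factorial_le hidx4
    have := Nat.le_of_dvd (Nat.factorial_pos _) hdvd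
    simp [Nat.factorial] at hle
    omega
  · have := K.normalCore_le
    rw [ht] at this
    exact top_le_iff.mp this
end

section
/- Let p be a prime, G a finite group, and N a normal subgroup of G that is a p-group and is contained in the Frattini subgroup of G. If the quotient G/N is p-gcomplete, then G is p-gcomplete; that is, if every subgroup of G/N meeting every conjugacy class of p'-elements of G/N equals G/N, then every subgroup of G meeting every conjugacy class of p'-elements of G equals G. -/
lemma exists_coprime_lift (p : ℕ) (G : Type*) [Group G] [Finite G]
    (N : Subgroup G) [N.Normal] (hN : IsPGroup p N)
    (q : G ⧸ N) (hq : Nat.Coprime (orderOf q) p) :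
    ∃ g : G, QuotientGroup.mk g = q ∧ Nat.Coprime (orderOf g) p := by
  obtain ⟨g, rfl⟩ := QuotientGroup.mk_surjective q
  set m := orderOf (QuotientGroup.mk' N g) with hm
  have hmem : g ^ m ∈ N := by
    have h1 : QuotientGroup.mk' N (g ^ m) = 1 := by
      rw [map_pow]; exact pow_orderOf_eq_one _
    exact (QuotientGroup.eq_one_iff _).mp h1
  obtain ⟨k, hk⟩ := hN ⟨g ^ m, hmem⟩
  have hk' : g ^ (m * p ^ k) = 1 := by
    have := congrArg (Subgroup.subtype N) hk
    simpa [pow_mul] using this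
  have hord : orderOf (g ^ p ^ k) ∣ m := by
    apply orderOf_dvd_of_pow_eq_one
    rw [← pow_mul, mul_comm, hk']
  have hcop : (p ^ k).Coprime m := Nat.Coprime.pow_left k hq.symm
  obtain ⟨t, ht⟩ := exists_pow_eq_self_of_coprime (x := QuotientGroup.mk' N g) hcop
  refine ⟨(g ^ p ^ k) ^ t, ?_, ?_⟩
  · have : QuotientGroup.mk' N ((g ^ p ^ k) ^ t) = QuotientGroup.mk' N g := by
      rw [map_pow, map_pow]; exact ht
    exact this
  · exact Nat.Coprime.coprime_dvd_left ((orderOf_pow_dvd t).trans hord) hq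

/-- Let `p` be a prime, `G` a finite group, and `N ◁ G` a normal `p`-subgroup
contained in the Frattini subgroup of `G`.  If `G/N` is `p`-gcomplete (every subgroup of
`G/N` meeting every conjugacy class of elements of order prime to `p` is all of `G/N`),
then `G` is `p`-gcomplete. -/
theorem p_gcomplete_of_frattini_quotient
    (p : ℕ) (hp : p.Prime) (G : Type*) [Group G] [Finite G]
    (N : Subgroup G) [N.Normal] (hN : IsPGroup p N) (hfr : N ≤ frattini G)
    (hquot : ∀ K : Subgroup (G ⧸ N),
      (∀ g : G ⧸ N, Nat.Coprime (orderOf g) p → ∃ k ∈ K, IsConj g k) → K = ⊤) :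
    ∀ K : Subgroup G, (∀ g : G, Nat.Coprime (orderOf g) p → ∃ k ∈ K, IsConj g k) → K = ⊤ := by
  intro K hK
  have htop : K.map (QuotientGroup.mk' N) = ⊤ := by
    apply hquot
    intro q hq
    obtain ⟨g, rfl, hg⟩ := exists_coprime_lift p G N hN q hq
    obtain ⟨x, hxK, hconj⟩ := hK g hg
    exact ⟨QuotientGroup.mk' N x, Subgroup.mem_map_of_mem _ hxK, (QuotientGroup.mk' N).map_isConj hconj⟩
  have hsup : K ⊔ N = ⊤ := by
    have h1 : Subgroup.comap (QuotientGroup.mk' N) (K.map (QuotientGroup.mk' N)) = ⊤ := by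
      rw [htop, Subgroup.comap_top]
    rwa [Subgroup.comap_map_eq, QuotientGroup.ker_mk'] at h1
  apply frattini_nongenerating
  rw [eq_top_iff, ← hsup]
  exact sup_le_sup_left hfr K
end
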